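/- arXiv:math/0211091 — 3 statements merged into one kernel-verified Lean document; each statement's English description precedes it below -/
import Mathlib

section
/- Let V and W be closed subspaces of a real Hilbert space H. Then V and W are commensurable (i.e. P_V - P_W is compact) if and only if both P_{W⊥}P_V and P_{V⊥}P_W are compact operators. Moreover, if V and W are commensurable, then the subspaces V ∩ W⊥ and V⊥ ∩ W are finite-dimensional. -/
open scoped RealInnerProductSpace

variable {H : Type*} [NormedAddCommGroup H] [InnerProductSpace ℝ H] [CompleteSpace H]

/-- The orthogonal projection onto a closed (complete) subspace, as an operator `H →L[ℝ] H`. -/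
noncomputable def projCLM (V : Submodule ℝ H) [V.HasOrthogonalProjection] : H →L[ℝ] H :=
  V.subtypeL.comp V.orthogonalProjectionOnto

/-- Two closed subspaces are commensurable if the difference of the orthogonal projections
onto them is a compact operator. -/
def AreCommensurable (V W : Submodule ℝ H) [V.HasOrthogonalProjection]
    [W.HasOrthogonalProjection] : Prop :=
  IsCompactOperator ⇑(projCLM V - projCLM W)

/-! Write `D = P_V - P_W`. Idempotency of the projections gives `P_{W⊥} P_V = D P_V`,
`P_{V⊥} P_W = -D P_W` and `D² = P_{W⊥} P_V + P_{V⊥} P_W`. Hence commensurability makes both products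
compact; conversely `D²` is then compact, and a self-adjoint `D` with compact square is compact
because `‖D z‖² = ⟪D² z, z⟫ ≤ ‖D² z‖ ‖z‖`. Finally `D` is the identity on `V ⊓ W⊥`, which therefore
lies in the eigenspace for `1` of a compact operator and is finite-dimensional. -/

open Metric in
theorem IsCompactOperator.of_norm_sq_le_norm_mul_norm {𝕜 E F G : Type*} [NontriviallyNormedField 𝕜]
    [NormedAddCommGroup E] [NormedSpace 𝕜 E] [NormedAddCommGroup F] [NormedSpace 𝕜 F]
    [CompleteSpace F] [NormedAddCommGroup G] [NormedSpace 𝕜 G] {S : E →L[𝕜] G} {T : E →L[𝕜] F}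
    (hS : IsCompactOperator S) (hT : ∀ z, ‖T z‖ ^ 2 ≤ ‖S z‖ * ‖z‖) : IsCompactOperator T := by
  refine (isCompactOperator_iff_isCompact_closure_image_closedBall (T : E →ₗ[𝕜] F) one_pos).2 ?_
  refine (TotallyBounded.closure ?_).isCompact_of_isClosed isClosed_closure
  have hSB : TotallyBounded (S '' closedBall 0 1) :=
    (hS.isCompact_closure_image_closedBall (f := (S : E →ₗ[𝕜] G)) 1).totallyBounded.subset
      subset_closure
  rw [totallyBounded_iff]
  intro ε hε
  -- On the unit ball `B`, `‖T x - T y‖² ≤ 2 ‖S x - S y‖`, so an `ε² / 4`-net of `S '' B` gives an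
  -- `ε`-net of `T '' B`.
  obtain ⟨t, htB, htf, hcover⟩ := Set.exists_subset_image_finite_and.1
    (finite_approx_of_totallyBounded hSB (ε ^ 2 / 4) (by positivity))
  refine ⟨T '' t, htf.image T, ?_⟩
  rintro _ ⟨x, hx, rfl⟩
  obtain ⟨_, ⟨y, hyt, rfl⟩, hSxy⟩ := Set.mem_iUnion₂.1 (hcover ⟨x, hx, rfl⟩)
  refine Set.mem_iUnion₂.2 ⟨T y, ⟨y, hyt, rfl⟩, ?_⟩
  have hxy : ‖x - y‖ ≤ 2 := (norm_sub_le x y).trans <| by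
    linarith [mem_closedBall_zero_iff.1 hx, mem_closedBall_zero_iff.1 (htB hyt)]
  rw [mem_ball, dist_eq_norm]
  refine lt_of_pow_lt_pow_left₀ 2 hε.le ?_
  calc ‖T x - T y‖ ^ 2 = ‖T (x - y)‖ ^ 2 := by rw [map_sub]
    _ ≤ ‖S (x - y)‖ * ‖x - y‖ := hT _
    _ ≤ ε ^ 2 / 4 * 2 := by
      refine mul_le_mul ?_ hxy (norm_nonneg _) (by positivity)
      rw [map_sub, ← dist_eq_norm]
      exact (mem_ball.1 hSxy).le
    _ < ε ^ 2 := by linarith [pow_pos hε 2]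

theorem ContinuousLinearMap.isCompactOperator_of_isCompactOperator_adjoint_comp_self
    {𝕜 E F : Type*} [RCLike 𝕜] [NormedAddCommGroup E] [InnerProductSpace 𝕜 E] [CompleteSpace E]
    [NormedAddCommGroup F] [InnerProductSpace 𝕜 F] [CompleteSpace F] {T : E →L[𝕜] F}
    (h : IsCompactOperator (adjoint T ∘L T)) : IsCompactOperator T :=
  h.of_norm_sq_le_norm_mul_norm fun z =>
    (T.apply_norm_sq_eq_inner_adjoint_left z).trans_le (re_inner_le_norm _ _)

theorem IsIdempotentElem.sub_mul_sub_eq {R : Type*} [Ring R] {p q : R} (hp : IsIdempotentElem p)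
    (hq : IsIdempotentElem q) : (p - q) * (p - q) = (1 - q) * p + (1 - p) * q := by
  rw [sub_mul, mul_sub, mul_sub, hp.eq, hq.eq, sub_mul, sub_mul, one_mul, one_mul]
  abel

theorem IsIdempotentElem.one_sub_mul_eq_sub_mul {R : Type*} [Ring R] {p : R}
    (hp : IsIdempotentElem p) (q : R) : (1 - q) * p = (p - q) * p := by
  rw [sub_mul, sub_mul, one_mul, hp.eq]

omit [CompleteSpace H] in
theorem projCLM_eq_starProjection (V : Submodule ℝ H) [V.HasOrthogonalProjection] :
    projCLM V = V.starProjection :=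
  rfl

section AreCommensurable

variable {V W : Submodule ℝ H} [V.HasOrthogonalProjection] [W.HasOrthogonalProjection]

omit [CompleteSpace H] in
theorem AreCommensurable.symm (h : AreCommensurable V W) : AreCommensurable W V := by
  rw [AreCommensurable, ← neg_sub]
  exact h.neg

omit [CompleteSpace H] in
theorem AreCommensurable.isCompactOperator_projCLM_orthogonal_comp (h : AreCommensurable V W) :
    IsCompactOperator ⇑((projCLM Wᗮ).comp (projCLM V)) := by
  simp only [projCLM_eq_starProjection] at h ⊢
  rw [← ContinuousLinearMap.mul_def, W.starProjection_orthogonal',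
    V.isIdempotentElem_starProjection.one_sub_mul_eq_sub_mul]
  exact h.comp_clm _

theorem AreCommensurable.finiteDimensional_inf_orthogonal (h : AreCommensurable V W) :
    FiniteDimensional ℝ ↥(V ⊓ Wᗮ) := by
  have hfix : V ⊓ Wᗮ ≤ Module.End.eigenspace (projCLM V - projCLM W).toLinearMap 1 := by
    rintro x ⟨hxV, hxW⟩
    simp only [Module.End.mem_eigenspace_iff, one_smul, ContinuousLinearMap.coe_coe,
      sub_apply, projCLM_eq_starProjection]
    rw [V.starProjection_eq_self_iff.2 hxV, W.starProjection_apply_eq_zero_iff.2 hxW, sub_zero]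
  have := ContinuousLinearMap.finite_dimensional_eigenspace h 1 one_ne_zero
  exact Submodule.finiteDimensional_of_le hfix

theorem areCommensurable_of_isCompactOperator_projCLM_orthogonal_comp
    (hVW : IsCompactOperator ⇑((projCLM Wᗮ).comp (projCLM V)))
    (hWV : IsCompactOperator ⇑((projCLM Vᗮ).comp (projCLM W))) : AreCommensurable V W := by
  have hD : IsSelfAdjoint (projCLM V - projCLM W) :=
    (isSelfAdjoint_starProjection V).sub (isSelfAdjoint_starProjection W)
  refine ContinuousLinearMap.isCompactOperator_of_isCompactOperator_adjoint_comp_self ?_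
  rw [← ContinuousLinearMap.star_eq_adjoint, hD.star_eq, ← ContinuousLinearMap.mul_def,
    projCLM_eq_starProjection, projCLM_eq_starProjection,
    V.isIdempotentElem_starProjection.sub_mul_sub_eq W.isIdempotentElem_starProjection,
    ← V.starProjection_orthogonal', ← W.starProjection_orthogonal']
  exact hVW.add hWV

end AreCommensurable

/-- `V` and `W` are commensurable iff `P_{W^⊥} P_V` and `P_{V^⊥} P_W` are both compact;
moreover, if `V` and `W` are commensurable then `V ∩ W^⊥` and `V^⊥ ∩ W` are
finite dimensional. -/
theorem areCommensurable_iff_and_finiteDimensional_of_areCommensurable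
    (V W : Submodule ℝ H) [CompleteSpace V] [CompleteSpace W] :
    (AreCommensurable V W ↔
      IsCompactOperator ⇑((projCLM Wᗮ).comp (projCLM V)) ∧
        IsCompactOperator ⇑((projCLM Vᗮ).comp (projCLM W))) ∧
    (AreCommensurable V W →
      FiniteDimensional ℝ ↥(V ⊓ Wᗮ) ∧ FiniteDimensional ℝ ↥(Vᗮ ⊓ W)) := by
  refine ⟨⟨fun h => ⟨h.isCompactOperator_projCLM_orthogonal_comp,
      h.symm.isCompactOperator_projCLM_orthogonal_comp⟩,
    fun ⟨hVW, hWV⟩ => areCommensurable_of_isCompactOperator_projCLM_orthogonal_comp hVW hWV⟩,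
    fun h => ⟨h.finiteDimensional_inf_orthogonal, ?_⟩⟩
  rw [inf_comm]
  exact h.symm.finiteDimensional_inf_orthogonal
end

section
/- If B is an RCPPI bounded symmetric bilinear form on a real Hilbert space H, then its index n₋(B) is finite and its nullity n₀(B) is finite. -/
/-!
Write `S = P + K` with `c * ‖x‖ ^ 2 ≤ ⟪P x, x⟫` and `K` compact. A compact operator is within
`c / 2` in norm of its compression `π_Y ∘ K` to some finite-dimensional subspace `Y`, so
`0 < ⟪S x, x⟫` for every nonzero `x` with `π_Y (K x) = 0`. Hence every subspace on which the
form is nonpositive (each negative definite subspace, and `ker S`) meets the kernel of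
`x ↦ π_Y (K x)` trivially, and so has dimension at most `dim Y`.
-/

open scoped RealInnerProductSpace

variable {H : Type*} [NormedAddCommGroup H] [InnerProductSpace ℝ H] [CompleteSpace H]

/-- An operator on a real Hilbert space is RCPPI if it is a compact perturbation of a
self-adjoint invertible operator which is coercive (a positive isomorphism). -/
def IsRCPPIOp {E : Type*} [NormedAddCommGroup E] [InnerProductSpace ℝ E] [CompleteSpace E]
    (A : E →L[ℝ] E) : Prop :=
  ∃ (P : E ≃L[ℝ] E) (K : E →L[ℝ] E), IsSelfAdjoint (P : E →L[ℝ] E) ∧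
    (∃ c > 0, ∀ x : E, c * ‖x‖ ^ 2 ≤ ⟪(P : E →L[ℝ] E) x, x⟫) ∧
    IsCompactOperator ⇑K ∧ A = (P : E →L[ℝ] E) + K

/-- An operator on a real Hilbert space is RCPNI if it is a compact perturbation of a
self-adjoint invertible operator which is negative (a negative isomorphism). -/
def IsRCPNIOp {E : Type*} [NormedAddCommGroup E] [InnerProductSpace ℝ E] [CompleteSpace E]
    (A : E →L[ℝ] E) : Prop :=
  ∃ (N : E ≃L[ℝ] E) (K : E →L[ℝ] E), IsSelfAdjoint (N : E →L[ℝ] E) ∧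
    (∃ c > 0, ∀ x : E, ⟪(N : E →L[ℝ] E) x, x⟫ ≤ -(c * ‖x‖ ^ 2)) ∧
    IsCompactOperator ⇑K ∧ A = (N : E →L[ℝ] E) + K

/-- The index `n₋` of the restriction of the form `B` to the subspace `U`: the supremum of
the dimensions of the subspaces of `U` on which `B` is negative definite. -/
noncomputable def negIndexOn (B : H → H → ℝ) (U : Submodule ℝ H) : ℕ∞ :=
  ⨆ W : {W : Submodule ℝ H // W ≤ U ∧ FiniteDimensional ℝ W ∧ ∀ x ∈ W, x ≠ 0 → B x x < 0},
    (Module.finrank ℝ W.1 : ℕ∞)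

/-- The coindex `n₊` of the restriction of the form `B` to the subspace `U`. -/
noncomputable def posIndexOn (B : H → H → ℝ) (U : Submodule ℝ H) : ℕ∞ :=
  ⨆ W : {W : Submodule ℝ H // W ≤ U ∧ FiniteDimensional ℝ W ∧ ∀ x ∈ W, x ≠ 0 → 0 < B x x},
    (Module.finrank ℝ W.1 : ℕ∞)

theorem IsCompactOperator.exists_finiteDimensional_norm_sub_starProjection_comp_le
    {𝕜 E F : Type*} [RCLike 𝕜] [NormedAddCommGroup E] [NormedSpace 𝕜 E]
    [NormedAddCommGroup F] [InnerProductSpace 𝕜 F] {K : E →L[𝕜] F}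
    (hK : IsCompactOperator K) {ε : ℝ} (hε : 0 < ε) :
    ∃ (Y : Submodule 𝕜 F) (_ : FiniteDimensional 𝕜 Y), ‖K - Y.starProjection ∘L K‖ ≤ ε := by
  obtain ⟨t, ht, hnet⟩ := Metric.totallyBounded_iff.mp
    (hK.isCompact_closure_image_closedBall 1).totallyBounded ε hε
  set Y := Submodule.span 𝕜 t
  have hY : FiniteDimensional 𝕜 Y := FiniteDimensional.span_of_finite 𝕜 ht
  refine ⟨Y, hY, ContinuousLinearMap.opNorm_le_of_unit_norm hε.le fun x hx => ?_⟩
  obtain ⟨y, hyt, hy⟩ := Set.mem_iUnion₂.mp <| hnet <| subset_closure ⟨x, by simp [hx], rfl⟩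
  have hyY : Y.starProjection y = y :=
    Submodule.starProjection_eq_self_iff.mpr (Submodule.subset_span hyt)
  -- subtracting `y ∈ Y` does not change the component orthogonal to `Y`
  calc ‖(K - Y.starProjection ∘L K) x‖ = ‖Yᗮ.starProjection (K x - y)‖ := by
        simp [Submodule.starProjection_orthogonal', hyY]
    _ ≤ ‖K x - y‖ := Submodule.norm_starProjection_apply_le _ _
    _ ≤ ε := by simpa [dist_eq_norm] using (Metric.mem_ball.mp hy).le

theorem Submodule.finiteDimensional_and_finrank_le_of_disjoint_ker {K M F : Type*}
    [DivisionRing K] [AddCommGroup M] [Module K M] [AddCommGroup F] [Module K F]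
    [FiniteDimensional K F] {T : M →ₗ[K] F} {V : Submodule K M}
    (hV : Disjoint V (LinearMap.ker T)) :
    FiniteDimensional K V ∧ Module.finrank K V ≤ Module.finrank K F :=
  have hinj := LinearMap.injective_domRestrict_iff.mpr hV
  ⟨Module.Finite.of_injective _ hinj, LinearMap.finrank_le_finrank_of_injective hinj⟩

theorem IsRCPPIOp.exists_finiteDimensional_inner_pos_on_ker {S : H →L[ℝ] H}
    (hS : IsRCPPIOp S) :
    ∃ (Y : Submodule ℝ H) (_ : FiniteDimensional ℝ Y) (T : H →ₗ[ℝ] Y),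
      ∀ x, T x = 0 → x ≠ 0 → 0 < ⟪S x, x⟫ := by
  obtain ⟨P, K, -, ⟨c, hc, hP⟩, hK, rfl⟩ := hS
  obtain ⟨Y, hY, hKY⟩ := hK.exists_finiteDimensional_norm_sub_starProjection_comp_le (half_pos hc)
  refine ⟨Y, hY, Y.orthogonalProjectionOnto.toLinearMap ∘ₗ K.toLinearMap, fun x hx hx0 => ?_⟩
  have hKxY : Y.starProjection (K x) = 0 := by
    rw [Submodule.starProjection_apply]
    exact congrArg Subtype.val hx
  have hKx : ‖K x‖ ≤ c / 2 * ‖x‖ :=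
    calc ‖K x‖ = ‖(K - Y.starProjection ∘L K) x‖ := by simp [hKxY]
      _ ≤ ‖K - Y.starProjection ∘L K‖ * ‖x‖ := ContinuousLinearMap.le_opNorm _ _
      _ ≤ c / 2 * ‖x‖ := by gcongr
  have hx : 0 < ‖x‖ := norm_pos_iff.mpr hx0
  calc 0 < c / 2 * ‖x‖ ^ 2 := by positivity
    _ = c * ‖x‖ ^ 2 - c / 2 * ‖x‖ * ‖x‖ := by ring
    _ ≤ ⟪(P : H →L[ℝ] H) x, x⟫ - ‖K x‖ * ‖x‖ := by gcongr; exact hP x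
    _ ≤ ⟪(P : H →L[ℝ] H) x, x⟫ + ⟪K x, x⟫ := by
          linarith [neg_le_of_abs_le (abs_real_inner_le_norm (K x) x)]
    _ = ⟪((P : H →L[ℝ] H) + K) x, x⟫ := by simp [inner_add_left]

theorem IsRCPPIOp.exists_finrank_le_of_inner_nonpos {S : H →L[ℝ] H} (hS : IsRCPPIOp S) :
    ∃ m : ℕ, ∀ V : Submodule ℝ H, (∀ x ∈ V, ⟪S x, x⟫ ≤ 0) →
      FiniteDimensional ℝ V ∧ Module.finrank ℝ V ≤ m := by
  obtain ⟨Y, _, T, hT⟩ := hS.exists_finiteDimensional_inner_pos_on_ker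
  refine ⟨Module.finrank ℝ Y, fun V hV => ?_⟩
  refine Submodule.finiteDimensional_and_finrank_le_of_disjoint_ker (T := T)
    (Submodule.disjoint_def.mpr fun x hxV hxT => ?_)
  by_contra hx0
  exact (hV x hxV).not_gt (hT x hxT hx0)

theorem finite_negIndex_and_nullity_of_RCPPI_general
    (B : H → H → ℝ) (S : H →L[ℝ] H)
    (hB : ∀ x y, B x y = ⟪S x, y⟫)
    (hRCPPI : IsRCPPIOp S) :
    negIndexOn B (⊤ : Submodule ℝ H) ≠ ⊤ ∧
    FiniteDimensional ℝ ↥(LinearMap.ker (S : H →ₗ[ℝ] H)) := by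
  obtain ⟨m, hm⟩ := hRCPPI.exists_finrank_le_of_inner_nonpos
  refine ⟨ne_top_of_le_ne_top (ENat.natCast_ne_top m) (iSup_le fun W => ?_), ?_⟩
  · have hW : ∀ x ∈ W.1, ⟪S x, x⟫ ≤ 0 := fun x hx => by
      rcases eq_or_ne x 0 with rfl | hx0
      · simp
      · exact (hB x x ▸ W.2.2.2 x hx hx0).le
    exact_mod_cast (hm W.1 hW).2
  · exact (hm _ fun x hx => by rw [show S x = 0 from hx, inner_zero_left]).1

/-- If `B` is an RCPPI bounded symmetric bilinear form with realization `S`, then its index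
`n₋(B)` is finite and its nullity `n₀(B) = dim (ker S)` is finite. -/
theorem finite_negIndex_and_nullity_of_RCPPI
    (B : H → H → ℝ) (S : H →L[ℝ] H) (hS : IsSelfAdjoint S)
    (hB : ∀ x y, B x y = ⟪S x, y⟫)
    (hRCPPI : IsRCPPIOp S) :
    negIndexOn B (⊤ : Submodule ℝ H) ≠ ⊤ ∧
    FiniteDimensional ℝ ↥(LinearMap.ker (S : H →ₗ[ℝ] H)) :=
  finite_negIndex_and_nullity_of_RCPPI_general B S hB hRCPPI
end

section
/- Let g be a nondegenerate symmetric bilinear form on ℝⁿ of index 1 (i.e. the maximal dimension of a subspace of ℝⁿ on which g is negative definite equals 1), let w ∈ ℝⁿ be a nonzero vector with g(w,w) ≤ 0, and let R : [0,1] → End(ℝⁿ) be a continuous curve of g-symmetric endomorphisms satisfying R(t)w = 0 for all t ∈ [0,1]. Let 𝕁 be the set of C² solutions J : [0,1] → ℝⁿ of J'' = R(t)J with J(0) = 0, and for t₀ ∈ (0,1] set 𝕁[t₀] = {J(t₀) : J ∈ 𝕁}. Then g is positive definite on the g-orthogonal complement {v ∈ ℝⁿ : g(v,u) = 0 for all u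 ∈ 𝕁[t₀]}. (This is the key step showing that conjugate points along causal Lorentzian geodesics have signature equal to their multiplicity.) -/
/-!
Every `J ∈ 𝕁` satisfies `(g(w, J))'' = g(w, RJ) = g(Rw, J) = 0`, so
`g(w, J(t)) = t g(w, J'(0))`; by nondegeneracy some `J` has `g(w, J(t₀)) ≠ 0`. Since `t ↦ t w`
also lies in `𝕁`, the plane spanned by `w` and `J(t₀)` inside `𝕁[t₀]` carries the indefinite form
`g(J(t₀) + s t₀ w, J(t₀) + s t₀ w) = g(J(t₀), J(t₀)) + 2 s t₀ g(w, J(t₀)) + s² t₀² g(w, w)`,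
so `𝕁[t₀]` contains a timelike vector `z`. As `g` has index `1`, it is positive semidefinite on
`z^⊥`, and then positive definite there by nondegeneracy and Cauchy–Schwarz.
-/

open Set
open scoped NNReal

section IndexOne

variable {V : Type*} [AddCommGroup V] [Module ℝ V] (g : LinearMap.BilinForm ℝ V)

theorem apply_self_neg_of_mem_span_pair {x z : V} (hxz : g x z = 0) (hzx : g z x = 0)
    (hx : g x x < 0) (hz : g z z < 0) :
    ∀ y ∈ Submodule.span ℝ (range ![x, z]), y ≠ 0 → g y y < 0 := by
  intro y hy hy0
  obtain ⟨c, rfl⟩ := (Submodule.mem_span_range_iff_exists_fun ℝ).mp hy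
  simp only [Fin.sum_univ_two, Matrix.cons_val_zero, Matrix.cons_val_one] at hy0 ⊢
  have hc : c 0 ≠ 0 ∨ c 1 ≠ 0 := by
    by_contra! hc
    simp [hc] at hy0
  have hexp : g (c 0 • x + c 1 • z) (c 0 • x + c 1 • z) = c 0 ^ 2 * g x x + c 1 ^ 2 * g z z := by
    simp only [map_add, map_smul, LinearMap.add_apply, LinearMap.smul_apply, smul_eq_mul,
      hxz, hzx]
    ring
  rw [hexp]
  rcases hc with hc | hc
  · nlinarith [sq_pos_of_ne_zero hc, sq_nonneg (c 1)]
  · nlinarith [sq_pos_of_ne_zero hc, sq_nonneg (c 0)]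

theorem linearIndependent_pair_of_apply_eq_zero {x z : V} (hxz : g x z = 0) (hzx : g z x = 0)
    (hx : g x x ≠ 0) (hz : g z z ≠ 0) : LinearIndependent ℝ ![x, z] := by
  refine LinearIndependent.pair_iff.mpr fun s t hst => ⟨?_, ?_⟩
  · have h := congrArg (fun y => g y x) hst
    simp only [map_add, map_smul, LinearMap.add_apply, LinearMap.smul_apply, smul_eq_mul,
      hzx, map_zero, LinearMap.zero_apply] at h
    simpa [hx] using h
  · have h := congrArg (fun y => g y z) hst
    simp only [map_add, map_smul, LinearMap.add_apply, LinearMap.smul_apply, smul_eq_mul,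
      hxz, map_zero, LinearMap.zero_apply] at h
    simpa [hz] using h

theorem apply_self_nonneg_of_apply_eq_zero_of_neg (hgsymm : ∀ x y, g x y = g y x)
    (hgmax : ∀ W : Submodule ℝ V, (∀ x ∈ W, x ≠ 0 → g x x < 0) → Module.finrank ℝ W ≤ 1)
    {x z : V} (hz : g z z < 0) (hxz : g x z = 0) : 0 ≤ g x x := by
  by_contra! hx
  have hzx : g z x = 0 := hgsymm z x ▸ hxz
  have hrank := finrank_span_eq_card
    (linearIndependent_pair_of_apply_eq_zero g hxz hzx hx.ne hz.ne)
  have := hgmax _ (apply_self_neg_of_mem_span_pair g hxz hzx hx hz)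
  simp [hrank] at this

theorem apply_self_pos_of_apply_eq_zero_of_neg (hgsymm : ∀ x y, g x y = g y x)
    (hgnondeg : ∀ x, (∀ y, g x y = 0) → x = 0)
    (hgmax : ∀ W : Submodule ℝ V, (∀ x ∈ W, x ≠ 0 → g x x < 0) → Module.finrank ℝ W ≤ 1)
    {x z : V} (hz : g z z < 0) (hxz : g x z = 0) (hx : x ≠ 0) : 0 < g x x := by
  have hnonneg : ∀ x', g x' z = 0 → 0 ≤ g x' x' := fun x' hx'z =>
    apply_self_nonneg_of_apply_eq_zero_of_neg g hgsymm hgmax hz hx'z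
  refine (hnonneg x hxz).lt_of_ne fun hxx => hx (hgnondeg x fun y => ?_)
  -- `y` splits as `y' + c • z` with `g y' z = 0`; Cauchy–Schwarz on `z^⊥` kills `g x y'`.
  set y' := y - (g z y / g z z) • z
  have hy'z : g y' z = 0 := by
    simp only [y', map_sub, map_smul, LinearMap.sub_apply, LinearMap.smul_apply, smul_eq_mul,
      hgsymm y z]
    field_simp [hz.ne]
    ring
  have hquad : ∀ t : ℝ, 0 ≤ g y' y' * (t * t) + 2 * g x y' * t + 0 := by
    intro t
    have h := hnonneg (x + t • y') (by simp [hxz, hy'z])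
    simp only [map_add, map_smul, LinearMap.add_apply, LinearMap.smul_apply, smul_eq_mul,
      hgsymm y' x, ← hxx] at h
    linarith
  have hxy' : g x y' = 0 := by
    have := discrim_le_zero hquad
    rw [discrim] at this
    nlinarith [sq_nonneg (g x y')]
  simpa [y', hxz] using hxy'

theorem exists_apply_self_add_smul_neg (hgsymm : ∀ x y, g x y = g y x) {u w : V}
    (hww : g w w ≤ 0) (hwu : g w u ≠ 0) : ∃ s : ℝ, g (u + s • w) (u + s • w) < 0 := by
  refine ⟨-(|g u u| + 1) / (2 * g w u), ?_⟩
  simp only [map_add, map_smul, LinearMap.add_apply, LinearMap.smul_apply, smul_eq_mul,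
    hgsymm u w]
  have hlin : 2 * (-(|g u u| + 1) / (2 * g w u)) * g w u = -(|g u u| + 1) := by
    field_simp
  nlinarith [le_abs_self (g u u), mul_nonpos_of_nonneg_of_nonpos
    (sq_nonneg (-(|g u u| + 1) / (2 * g w u))) hww]

end IndexOne

section LinearODE

variable {E : Type*} [NormedAddCommGroup E] [NormedSpace ℝ E]

theorem forall_mem_Icc_hasDerivWithinAt_piecewise {F : ℝ → E → E} {a b c : ℝ} {α β : ℝ → E}
    (hab : a ≤ b) (hbc : b ≤ c)
    (hα : ∀ t ∈ Icc a b, HasDerivWithinAt α (F t (α t)) (Icc a b) t)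
    (hβ : ∀ t ∈ Icc b c, HasDerivWithinAt β (F t (β t)) (Icc b c) t) (hαβ : α b = β b) :
    ∀ t ∈ Icc a c, HasDerivWithinAt (fun s => if s ≤ b then α s else β s)
      (F t (if t ≤ b then α t else β t)) (Icc a c) t := by
  set γ : ℝ → E := fun s => if s ≤ b then α s else β s
  have hγα : EqOn γ α (Icc a b) := fun s hs => if_pos hs.2
  have hγβ : EqOn γ β (Icc b c) := fun s hs => by
    rcases hs.1.eq_or_lt with rfl | hlt
    · simp [γ, hαβ]
    · exact if_neg hlt.not_ge
  intro t ht
  change HasDerivWithinAt γ (F t (γ t)) _ t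
  rw [← Icc_union_Icc_eq_Icc hab hbc]
  refine HasDerivWithinAt.union ?_ ?_
  · by_cases htb : t ≤ b
    · have htab : t ∈ Icc a b := ⟨ht.1, htb⟩
      rw [hγα htab]
      exact (hα t htab).congr hγα (hγα htab)
    · exact hasDerivWithinAt_iff_hasFDerivWithinAt.mpr
        (.of_notMem_closure (by rw [closure_Icc]; exact fun h => htb h.2))
  · by_cases hbt : b ≤ t
    · have htbc : t ∈ Icc b c := ⟨hbt, ht.2⟩
      rw [hγβ htbc]
      exact (hβ t htbc).congr hγβ (hγβ htbc)
    · exact hasDerivWithinAt_iff_hasFDerivWithinAt.mpr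
        (.of_notMem_closure (by rw [closure_Icc]; exact fun h => hbt h.1))

variable [CompleteSpace E]

theorem exists_forall_mem_Icc_hasDerivWithinAt_of_nnnorm_le {A : ℝ → E →L[ℝ] E} {a b : ℝ}
    {K : ℝ≥0} (hab : a ≤ b) (hA : ContinuousOn A (Icc a b)) (hK : ∀ t ∈ Icc a b, ‖A t‖₊ ≤ K)
    (hlen : 2 * K * (b - a) ≤ 1) (x₀ : E) :
    ∃ α : ℝ → E, α a = x₀ ∧ ∀ t ∈ Icc a b, HasDerivWithinAt α (A t (α t)) (Icc a b) t := by
  -- Picard–Lindelöf on the ball of radius `‖x₀‖` about `x₀`, where `‖A t x‖ ≤ 2 K ‖x₀‖`.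
  have hpl : IsPicardLindelof (fun t x => A t x) (⟨a, left_mem_Icc.mpr hab⟩ : Icc a b) x₀
      ‖x₀‖₊ 0 (2 * K * ‖x₀‖₊) K := by
    refine ⟨fun t ht => ((A t).lipschitz.weaken (hK t ht)).lipschitzOnWith,
      fun x _ => hA.clm_apply continuousOn_const, fun t ht x hx => ?_, ?_⟩
    · have hx' : ‖x‖ ≤ 2 * ‖x₀‖ := by
        have := norm_le_norm_add_norm_sub' x x₀
        rw [Metric.mem_closedBall, dist_eq_norm] at hx
        simp only [coe_nnnorm] at hx
        linarith
      calc ‖A t x‖ ≤ ‖A t‖ * ‖x‖ := (A t).le_opNorm x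
        _ ≤ K * (2 * ‖x₀‖) := mul_le_mul (hK t ht) hx' (norm_nonneg _) K.2
        _ = ((2 * K * ‖x₀‖₊ : ℝ≥0) : ℝ) := by push_cast; ring
    · simp only [sub_self, NNReal.coe_mul, NNReal.coe_ofNat, coe_nnnorm, NNReal.coe_zero,
        sub_zero, max_eq_left (sub_nonneg.mpr hab)]
      nlinarith [norm_nonneg x₀]
  exact hpl.exists_eq_forall_mem_Icc_hasDerivWithinAt₀

theorem exists_forall_mem_Icc_hasDerivWithinAt_clm_apply {A : ℝ → E →L[ℝ] E} {a b : ℝ}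
    (hab : a ≤ b) (hA : ContinuousOn A (Icc a b)) (x₀ : E) :
    ∃ α : ℝ → E, α a = x₀ ∧ ∀ t ∈ Icc a b, HasDerivWithinAt α (A t (α t)) (Icc a b) t := by
  obtain ⟨K, hK⟩ := isCompact_Icc.bddAbove_image hA.nnnorm
  replace hK : ∀ t ∈ Icc a b, ‖A t‖₊ ≤ K := fun t ht => hK (mem_image_of_mem _ ht)
  -- Cover `[a, c]` by `[a, c']` and a last piece `[c', c]` of `2K`-length at most `1`.
  have hsteps : ∀ k : ℕ, ∀ c ∈ Icc a b, 2 * K * (c - a) ≤ k → ∃ α : ℝ → E, α a = x₀ ∧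
      ∀ t ∈ Icc a c, HasDerivWithinAt α (A t (α t)) (Icc a c) t := by
    intro k
    induction k with
    | zero =>
      intro c hc hlen
      exact exists_forall_mem_Icc_hasDerivWithinAt_of_nnnorm_le hc.1
        (hA.mono (Icc_subset_Icc_right hc.2)) (fun t ht => hK t ⟨ht.1, ht.2.trans hc.2⟩)
        (by simp only [CharP.cast_eq_zero] at hlen; linarith) x₀
    | succ k ih =>
      intro c hc hlen
      set c' := a + k / (k + 1) * (c - a)
      have hk : (0 : ℝ) < k + 1 := by positivity
      have hac' : a ≤ c' := le_add_of_nonneg_right (by have := hc.1; positivity)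
      have hc'c : c' ≤ c := by
        have : (k : ℝ) / (k + 1) ≤ 1 := (div_le_one hk).mpr (by linarith)
        nlinarith [hc.1]
      push_cast at hlen
      obtain ⟨α, hα₀, hα⟩ := ih c' ⟨hac', hc'c.trans hc.2⟩ (by
        calc 2 * K * (c' - a) = k / (k + 1) * (2 * K * (c - a)) := by ring
          _ ≤ k / (k + 1) * (k + 1) := by gcongr
          _ = k := div_mul_cancel₀ _ hk.ne')
      obtain ⟨β, hβ₀, hβ⟩ := exists_forall_mem_Icc_hasDerivWithinAt_of_nnnorm_le hc'c
        (hA.mono (Icc_subset_Icc hac' hc.2))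
        (fun t ht => hK t ⟨hac'.trans ht.1, ht.2.trans hc.2⟩) (by
          calc 2 * K * (c - c') = 2 * K * (c - a) / (k + 1) := by
                simp only [c']; field_simp; ring
            _ ≤ 1 := (div_le_one hk).mpr hlen) (α c')
      exact ⟨_, by simp [hac', hα₀],
        forall_mem_Icc_hasDerivWithinAt_piecewise hac' hc'c hα hβ hβ₀.symm⟩
  obtain ⟨k, hk⟩ := exists_nat_ge (2 * K * (b - a) : ℝ)
  exact hsteps k b (right_mem_Icc.mpr hab) hk

end LinearODE

theorem eqOn_Icc_of_hasDerivWithinAt_eq {F : Type*} [NormedAddCommGroup F] [NormedSpace ℝ F]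
    {f g f' : ℝ → F} {a b : ℝ} (hf : ∀ t ∈ Icc a b, HasDerivWithinAt f (f' t) (Icc a b) t)
    (hg : ∀ t ∈ Icc a b, HasDerivWithinAt g (f' t) (Icc a b) t) (ha : f a = g a) :
    EqOn f g (Icc a b) :=
  eq_of_has_deriv_right_eq
    (fun t ht => (hf t (Ico_subset_Icc_self ht)).mono_of_mem_nhdsWithin
      (Icc_mem_nhdsGE_of_mem ht))
    (fun t ht => (hg t (Ico_subset_Icc_self ht)).mono_of_mem_nhdsWithin
      (Icc_mem_nhdsGE_of_mem ht))
    (fun t ht => (hf t ht).continuousWithinAt) (fun t ht => (hg t ht).continuousWithinAt) ha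

section MorseSturm

variable {E : Type*} [NormedAddCommGroup E] [NormedSpace ℝ E] {R : ℝ → E →L[ℝ] E}

/-- `J'` is the velocity of `J`, so that `J'' = R J` on `[0, 1]`. -/
structure IsMorseSturmSolution (R : ℝ → E →L[ℝ] E) (J J' : ℝ → E) : Prop where
  hasDerivWithinAt : ∀ t ∈ Icc (0 : ℝ) 1, HasDerivWithinAt J (J' t) (Icc 0 1) t
  hasDerivWithinAt_deriv : ∀ t ∈ Icc (0 : ℝ) 1, HasDerivWithinAt J' (R t (J t)) (Icc 0 1) t

theorem IsMorseSturmSolution.add {J J' K K' : ℝ → E} (hJ : IsMorseSturmSolution R J J')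
    (hK : IsMorseSturmSolution R K K') : IsMorseSturmSolution R (J + K) (J' + K') where
  hasDerivWithinAt t ht := (hJ.hasDerivWithinAt t ht).add (hK.hasDerivWithinAt t ht)
  hasDerivWithinAt_deriv t ht := by
    simpa using (hJ.hasDerivWithinAt_deriv t ht).add (hK.hasDerivWithinAt_deriv t ht)

theorem isMorseSturmSolution_smul_const {w : E} (hRw : ∀ t ∈ Icc (0 : ℝ) 1, R t w = 0) :
    IsMorseSturmSolution R (fun t => t • w) (fun _ => w) where
  hasDerivWithinAt t _ := by simpa using ((hasDerivAt_id t).smul_const w).hasDerivWithinAt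
  hasDerivWithinAt_deriv t ht := by
    simpa [hRw t ht] using hasDerivWithinAt_const t (Icc (0 : ℝ) 1) w

theorem IsMorseSturmSolution.apply_eq_of_comp_eq_zero {J J' : ℝ → E}
    (hJ : IsMorseSturmSolution R J J') (ℓ : E →L[ℝ] ℝ) (hℓ : ∀ t ∈ Icc (0 : ℝ) 1, ℓ ∘L R t = 0)
    {t : ℝ} (ht : t ∈ Icc (0 : ℝ) 1) : ℓ (J t) = ℓ (J 0) + t * ℓ (J' 0) := by
  have hJ' : EqOn (fun s => ℓ (J' s)) (fun _ => ℓ (J' 0)) (Icc 0 1) := by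
    refine eqOn_Icc_of_hasDerivWithinAt_eq (f' := 0) (fun s hs => ?_)
      (fun s _ => hasDerivWithinAt_const s _ _) rfl
    simpa [Function.comp_def, ← ContinuousLinearMap.comp_apply, hℓ s hs] using
      ℓ.hasFDerivAt.comp_hasDerivWithinAt s (hJ.hasDerivWithinAt_deriv s hs)
  refine eqOn_Icc_of_hasDerivWithinAt_eq (f := fun s => ℓ (J s))
    (g := fun s => ℓ (J 0) + s * ℓ (J' 0)) (f' := fun _ => ℓ (J' 0)) (fun s hs => ?_)
    (fun s _ => ?_) (by simp) ht
  · simpa [Function.comp_def, hJ' hs] using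
      ℓ.hasFDerivAt.comp_hasDerivWithinAt s (hJ.hasDerivWithinAt s hs)
  · simpa using ((hasDerivAt_id s).mul_const (ℓ (J' 0))).hasDerivWithinAt.const_add (ℓ (J 0))

theorem exists_isMorseSturmSolution [CompleteSpace E] (hR : ContinuousOn R (Icc 0 1)) (u₀ : E) :
    ∃ J J' : ℝ → E, IsMorseSturmSolution R J J' ∧ J 0 = 0 ∧ J' 0 = u₀ := by
  -- the first-order system `(J, J')' = (J', R J)`
  set A : ℝ → E × E →L[ℝ] E × E := fun t =>
    .inl ℝ E E ∘L .snd ℝ E E + .inr ℝ E E ∘L R t ∘L .fst ℝ E E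
  have hA : ContinuousOn A (Icc 0 1) :=
    continuousOn_const.add (continuousOn_const.clm_comp (hR.clm_comp continuousOn_const))
  obtain ⟨α, hα₀, hα⟩ :=
    exists_forall_mem_Icc_hasDerivWithinAt_clm_apply zero_le_one hA ((0 : E), u₀)
  refine ⟨fun t => (α t).1, fun t => (α t).2, ⟨fun t ht => ?_, fun t ht => ?_⟩, by simp [hα₀],
    by simp [hα₀]⟩
  · simpa [A, Function.comp_def] using
      (ContinuousLinearMap.fst ℝ E E).hasFDerivAt.comp_hasDerivWithinAt t (hα t ht)
  · simpa [A, Function.comp_def] using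
      (ContinuousLinearMap.snd ℝ E E).hasFDerivAt.comp_hasDerivWithinAt t (hα t ht)

end MorseSturm

theorem posDef_on_orthogonal_of_conjugate_space_general (n : ℕ)
    (g : (Fin n → ℝ) →ₗ[ℝ] (Fin n → ℝ) →ₗ[ℝ] ℝ)
    (hgsymm : ∀ x y, g x y = g y x)
    (hgnondeg : ∀ x, (∀ y, g x y = 0) → x = 0)
    (hgmax : ∀ W : Submodule ℝ (Fin n → ℝ),
      (∀ x ∈ W, x ≠ 0 → g x x < 0) → Module.finrank ℝ W ≤ 1)
    (w : Fin n → ℝ) (hw : w ≠ 0) (hww : g w w ≤ 0)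
    (R : ℝ → ((Fin n → ℝ) →L[ℝ] (Fin n → ℝ)))
    (hRcont : ContinuousOn R (Icc 0 1))
    (hRsymm : ∀ t ∈ Icc (0:ℝ) 1, ∀ x y, g (R t x) y = g x (R t y))
    (hRw : ∀ t ∈ Icc (0:ℝ) 1, R t w = 0)
    (t₀ : ℝ) (ht₀ : t₀ ∈ Ioc (0:ℝ) 1) :
    ∀ v : Fin n → ℝ, v ≠ 0 →
      (∀ u : Fin n → ℝ,
        (∃ J J' : ℝ → (Fin n → ℝ),
          (∀ t ∈ Icc (0:ℝ) 1, HasDerivWithinAt J (J' t) (Icc 0 1) t) ∧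
          (∀ t ∈ Icc (0:ℝ) 1, HasDerivWithinAt J' (R t (J t)) (Icc 0 1) t) ∧
          J 0 = 0 ∧ u = J t₀) → g v u = 0) →
      0 < g v v := by
  intro v hv hortho
  obtain ⟨u₀, hu₀⟩ : ∃ u₀, g w u₀ ≠ 0 := by
    by_contra! h
    exact hw (hgnondeg w h)
  obtain ⟨J, J', hJ, hJ0, hJ'0⟩ := exists_isMorseSturmSolution hRcont u₀
  have hwJ : g w (J t₀) = t₀ * g w u₀ := by
    have hℓ : ∀ t ∈ Icc (0 : ℝ) 1, LinearMap.toContinuousLinearMap (g w) ∘L R t = 0 :=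
      fun t ht => by ext x; simp [← hRsymm t ht, hRw t ht]
    simpa [hJ0, hJ'0] using hJ.apply_eq_of_comp_eq_zero _ hℓ ⟨ht₀.1.le, ht₀.2⟩
  obtain ⟨s, hs⟩ := exists_apply_self_add_smul_neg g hgsymm (u := J t₀) (w := t₀ • w)
    (by simpa [mul_assoc] using mul_nonpos_of_nonneg_of_nonpos (mul_self_nonneg t₀) hww)
    (by simpa [hwJ] using mul_ne_zero (mul_ne_zero ht₀.1.ne' ht₀.1.ne') hu₀)
  have hsol := hJ.add (isMorseSturmSolution_smul_const (w := s • w)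
    fun t ht => by rw [map_smul, hRw t ht, smul_zero])
  have hvz : g v (J t₀ + s • t₀ • w) = 0 :=
    hortho _ ⟨_, _, hsol.hasDerivWithinAt, hsol.hasDerivWithinAt_deriv, by simp [hJ0],
      by simp [smul_comm s t₀]⟩
  exact apply_self_pos_of_apply_eq_zero_of_neg g hgsymm hgnondeg hgmax hs hvz hv

/-- Key step for causal Lorentzian geodesics: let `g` have index `1`, let `w ≠ 0` be a
causal vector (`g(w,w) ≤ 0`) with `R(t)w = 0` for all `t`, and let
`𝕁[t₀] = {J(t₀) : J'' = R(t)J, J(0) = 0}`.  Then `g` is positive definite on the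
`g`-orthogonal complement of `𝕁[t₀]`. -/
theorem posDef_on_orthogonal_of_conjugate_space (n : ℕ)
    (g : (Fin n → ℝ) →ₗ[ℝ] (Fin n → ℝ) →ₗ[ℝ] ℝ)
    (hgsymm : ∀ x y, g x y = g y x)
    (hgnondeg : ∀ x, (∀ y, g x y = 0) → x = 0)
    (hgneg : ∃ W : Submodule ℝ (Fin n → ℝ),
      Module.finrank ℝ W = 1 ∧ ∀ x ∈ W, x ≠ 0 → g x x < 0)
    (hgmax : ∀ W : Submodule ℝ (Fin n → ℝ),
      (∀ x ∈ W, x ≠ 0 → g x x < 0) → Module.finrank ℝ W ≤ 1)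
    (w : Fin n → ℝ) (hw : w ≠ 0) (hww : g w w ≤ 0)
    (R : ℝ → ((Fin n → ℝ) →L[ℝ] (Fin n → ℝ)))
    (hRcont : ContinuousOn R (Icc 0 1))
    (hRsymm : ∀ t ∈ Icc (0:ℝ) 1, ∀ x y, g (R t x) y = g x (R t y))
    (hRw : ∀ t ∈ Icc (0:ℝ) 1, R t w = 0)
    (t₀ : ℝ) (ht₀ : t₀ ∈ Ioc (0:ℝ) 1) :
    ∀ v : Fin n → ℝ, v ≠ 0 →
      (∀ u : Fin n → ℝ,
        (∃ J J' : ℝ → (Fin n → ℝ),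
          (∀ t ∈ Icc (0:ℝ) 1, HasDerivWithinAt J (J' t) (Icc 0 1) t) ∧
          (∀ t ∈ Icc (0:ℝ) 1, HasDerivWithinAt J' (R t (J t)) (Icc 0 1) t) ∧
          J 0 = 0 ∧ u = J t₀) → g v u = 0) →
      0 < g v v :=
  posDef_on_orthogonal_of_conjugate_space_general n g hgsymm hgnondeg hgmax w hw hww R hRcont hRsymm
    hRw t₀ ht₀
end
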